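/- arXiv:2308.11434 — 3 statements merged into one kernel-verified Lean document; each statement's English description precedes it below -/
import Mathlib

section
/- Let G be a finite group and H a nontrivial subgroup. Then for every integer a and every even integer b with 0 ≤ a ≤ |H|−1, 0 ≤ b ≤ |H|, and gcd(2, |H|−1) dividing a, the subgroup H is an (a,b)-regular set of G: there exists an inverse-closed subset S of G \ {1} such that in Cay(G,S), every element of H has exactly a neighbors in H and every element of G \ H has exactly b neighbors in H. -/
open Finset

namespace Stmt11Aux


variable {α : Type*} [DecidableEq α]

/-- From a finite set closed under an involution, one can select a closed subset of any
size `t`, provided `t` is even or there is a fixed point. -/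
theorem exists_symm_subset (σ : α → α) :
    ∀ (t : ℕ) (s : Finset α), (∀ x ∈ s, σ x ∈ s) → (∀ x ∈ s, σ (σ x) = x) →
      t ≤ s.card → (Even t ∨ ∃ x ∈ s, σ x = x) →
      ∃ B ⊆ s, B.card = t ∧ ∀ x ∈ B, σ x ∈ B := by
  intro t
  induction t using Nat.strong_induction_on with
  | _ t IH =>
    intro s hσ hinv hts hpar
    rcases Nat.eq_zero_or_pos t with rfl | htpos
    · exact ⟨∅, empty_subset _, card_empty, by simp⟩
    rcases Nat.even_or_odd t with hev | hodd
    · -- even case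
      by_cases hp : ∃ x ∈ s, σ x ≠ x
      · obtain ⟨x, hxs, hxne⟩ := hp
        have hσx : σ x ∈ s := hσ x hxs
        set s' : Finset α := (s.erase x).erase (σ x) with hs'
        have hσxe : σ x ∈ s.erase x := mem_erase.2 ⟨hxne, hσx⟩
        have hcard' : s'.card = s.card - 2 := by
          rw [hs', card_erase_of_mem hσxe, card_erase_of_mem hxs]; omega
        have hsub' : s' ⊆ s := (erase_subset _ _).trans (erase_subset _ _)
        have hmem' : ∀ y, y ∈ s' ↔ y ∈ s ∧ y ≠ x ∧ y ≠ σ x := by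
          intro y
          simp only [hs', mem_erase]
          tauto
        have hσ' : ∀ y ∈ s', σ y ∈ s' := by
          intro y hy
          rcases (hmem' y).1 hy with ⟨hys, hyx, hyσx⟩
          refine (hmem' (σ y)).2 ⟨hσ y hys, ?_, ?_⟩
          · intro h
            exact hyσx (by rw [← hinv y hys, h])
          · intro h
            have := congrArg σ h
            rw [hinv y hys, hinv x hxs] at this
            exact hyx this
        have hinv' : ∀ y ∈ s', σ (σ y) = y := fun y hy => hinv y (hsub' hy)
        have ht2 : t - 2 ≤ s'.card := by omega
        have hev2 : Even (t - 2) := by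
          rcases hev with ⟨k, hk⟩; exact ⟨k - 1, by omega⟩
        have h2t : 2 ≤ t := by
          rcases hev with ⟨k, hk⟩; omega
        obtain ⟨B', hB's, hB'c, hB'cl⟩ :=
          IH (t - 2) (by omega) s' hσ' hinv' ht2 (Or.inl hev2)
        refine ⟨insert x (insert (σ x) B'), ?_, ?_, ?_⟩
        · intro y hy
          rcases mem_insert.1 hy with rfl | hy
          · exact hxs
          rcases mem_insert.1 hy with rfl | hy
          · exact hσx
          · exact hsub' (hB's hy)
        · have hxB : x ∉ insert (σ x) B' := by
            intro h
            rcases mem_insert.1 h with h | h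
            · exact hxne h.symm
            · exact ((hmem' x).1 (hB's h)).2.1 rfl
          have hσxB : σ x ∉ B' := fun h => ((hmem' (σ x)).1 (hB's h)).2.2 rfl
          rw [card_insert_of_notMem hxB, card_insert_of_notMem hσxB, hB'c]
          omega
        · intro y hy
          rcases mem_insert.1 hy with rfl | hy
          · exact mem_insert_of_mem (mem_insert_self _ _)
          rcases mem_insert.1 hy with rfl | hy
          · rw [hinv x hxs]; exact mem_insert_self _ _
          · exact mem_insert_of_mem (mem_insert_of_mem (hB'cl y hy))
      · push_neg at hp
        obtain ⟨B, hBs, hBc⟩ := Finset.exists_subset_card_eq hts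
        exact ⟨B, hBs, hBc, fun x hx => by rw [hp x (hBs hx)]; exact hx⟩
    · -- odd case: there must be a fixed point
      have hfix : ∃ x ∈ s, σ x = x := by
        rcases hpar with hev | hfix
        · exact absurd hev (by simpa using hodd)
        · exact hfix
      obtain ⟨x, hxs, hxfix⟩ := hfix
      set s' := s.erase x with hs'
      have hσ' : ∀ y ∈ s', σ y ∈ s' := by
        intro y hy
        rcases mem_erase.1 hy with ⟨hyx, hys⟩
        refine mem_erase.2 ⟨?_, hσ y hys⟩
        intro h
        apply hyx
        rw [← hinv y hys, h, hxfix]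
      have hinv' : ∀ y ∈ s', σ (σ y) = y := fun y hy => hinv y (mem_of_mem_erase hy)
      have hcard' : s'.card = s.card - 1 := card_erase_of_mem hxs
      have hev1 : Even (t - 1) := by
        rcases hodd with ⟨k, hk⟩; exact ⟨k, by omega⟩
      obtain ⟨B', hB's, hB'c, hB'cl⟩ :=
        IH (t - 1) (by omega) s' hσ' hinv' (by omega) (Or.inl hev1)
      have hxB' : x ∉ B' := fun h => (mem_erase.1 (hB's h)).1 rfl
      refine ⟨insert x B', ?_, ?_, ?_⟩
      · intro y hy
        rcases mem_insert.1 hy with rfl | hy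
        · exact hxs
        · exact mem_of_mem_erase (hB's hy)
      · rw [card_insert_of_notMem hxB', hB'c]; omega
      · intro y hy
        rcases mem_insert.1 hy with rfl | hy
        · rw [hxfix]; exact mem_insert_self _ _
        · exact mem_insert_of_mem (hB'cl y hy)

/-- A finite set closed under a fixed-point-free involution has even cardinality. -/
theorem even_card_of_symm (σ : α → α) :
    ∀ (s : Finset α), (∀ x ∈ s, σ x ∈ s) → (∀ x ∈ s, σ (σ x) = x) →
      (∀ x ∈ s, σ x ≠ x) → Even s.card := by
  intro s
  induction s using Finset.strongInduction with
  | _ s IH =>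
    intro hσ hinv hnf
    rcases s.eq_empty_or_nonempty with rfl | ⟨x, hxs⟩
    · simp
    have hσx : σ x ∈ s := hσ x hxs
    have hxne : σ x ≠ x := hnf x hxs
    set s' : Finset α := (s.erase x).erase (σ x) with hs'
    have hσxe : σ x ∈ s.erase x := mem_erase.2 ⟨hxne, hσx⟩
    have hmem' : ∀ y, y ∈ s' ↔ y ∈ s ∧ y ≠ x ∧ y ≠ σ x := by
      intro y; simp only [hs', mem_erase]; tauto
    have hssub : s' ⊂ s := by
      refine Finset.ssubset_iff_of_subset ((erase_subset _ _).trans (erase_subset _ _)) |>.2 ?_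
      exact ⟨x, hxs, fun h => ((hmem' x).1 h).2.1 rfl⟩
    have hσ' : ∀ y ∈ s', σ y ∈ s' := by
      intro y hy
      rcases (hmem' y).1 hy with ⟨hys, hyx, hyσx⟩
      refine (hmem' (σ y)).2 ⟨hσ y hys, ?_, ?_⟩
      · intro h; exact hyσx (by rw [← hinv y hys, h])
      · intro h
        have := congrArg σ h
        rw [hinv y hys, hinv x hxs] at this
        exact hyx this
    have hc := IH s' hssub hσ' (fun y hy => hinv y (hssub.1 hy))
      (fun y hy => hnf y (hssub.1 hy))
    have hcard' : s'.card = s.card - 2 := by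
      rw [hs', card_erase_of_mem hσxe, card_erase_of_mem hxs]; omega
    have h2 : 2 ≤ s.card := by
      have : ({x, σ x} : Finset α) ⊆ s := by
        intro y hy; rcases mem_insert.1 hy with rfl | hy
        · exact hxs
        · rw [mem_singleton.1 hy]; exact hσx
      have := card_le_card this
      rwa [card_pair (Ne.symm hxne)] at this
    rcases hc with ⟨k, hk⟩
    exact ⟨k + 1, by omega⟩




/-- "block mate": 2i ↦ 2i+1, 2i+1 ↦ 2i. -/
def bm (t : ℕ) : ℕ := if t % 2 = 0 then t + 1 else t - 1

theorem bm_add_two (t : ℕ) : bm (t + 2) = bm t + 2 := by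
  simp only [bm]; split_ifs <;> omega

theorem bm_bm (t : ℕ) : bm (bm t) = t := by
  simp only [bm]; split_ifs <;> omega

theorem bm_zero : bm 0 = 1 := rfl
theorem bm_one : bm 1 = 0 := rfl

/-- Labeling of a finite set with involution such that non-fixed orbits get
labels forming blocks `{2i, 2i+1}`. -/
theorem exists_bm_labeling (σ : α → α) :
    ∀ (C : Finset α), (∀ x ∈ C, σ x ∈ C) → (∀ x ∈ C, σ (σ x) = x) →
      ∃ f : α → ℕ, (∀ x ∈ C, f x < C.card) ∧
        (∀ t < C.card, ∃! x, x ∈ C ∧ f x = t) ∧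
        (∀ x ∈ C, σ x ≠ x → f (σ x) = bm (f x) ∧ bm (f x) < C.card) := by
  intro C
  induction C using Finset.strongInduction with
  | _ C IH =>
    intro hσ hinv
    by_cases hp : ∃ x ∈ C, σ x ≠ x
    · obtain ⟨x, hxC, hxne⟩ := hp
      have hσx : σ x ∈ C := hσ x hxC
      set C' : Finset α := (C.erase x).erase (σ x) with hC'
      have hσxe : σ x ∈ C.erase x := mem_erase.2 ⟨hxne, hσx⟩
      have hmem' : ∀ y, y ∈ C' ↔ y ∈ C ∧ y ≠ x ∧ y ≠ σ x := by
        intro y; simp only [hC', mem_erase]; tauto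
      have hcard : C.card = C'.card + 2 := by
        have h2 : 2 ≤ C.card := by
          have hss : ({x, σ x} : Finset α) ⊆ C := by
            intro y hy; rcases mem_insert.1 hy with rfl | hy
            · exact hxC
            · rw [mem_singleton.1 hy]; exact hσx
          have := card_le_card hss
          rwa [card_pair (Ne.symm hxne)] at this
        rw [hC', card_erase_of_mem hσxe, card_erase_of_mem hxC]; omega
      have hssub : C' ⊂ C := by
        refine Finset.ssubset_iff_of_subset ((erase_subset _ _).trans (erase_subset _ _)) |>.2 ?_
        exact ⟨x, hxC, fun h => ((hmem' x).1 h).2.1 rfl⟩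
      have hσ' : ∀ y ∈ C', σ y ∈ C' := by
        intro y hy
        rcases (hmem' y).1 hy with ⟨hys, hyx, hyσx⟩
        refine (hmem' (σ y)).2 ⟨hσ y hys, ?_, ?_⟩
        · intro h; exact hyσx (by rw [← hinv y hys, h])
        · intro h
          have h2 := congrArg σ h
          rw [hinv y hys, hinv x hxC] at h2
          exact hyx h2
      obtain ⟨f', hf'b, hf'u, hf'bm⟩ := IH C' hssub hσ' (fun y hy => hinv y (hssub.1 hy))
      obtain ⟨f, hfx⟩ : ∃ f : α → ℕ, ∀ z,
          f z = if z = x then 0 else if z = σ x then 1 else f' z + 2 :=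
        ⟨fun z => if z = x then 0 else if z = σ x then 1 else f' z + 2, fun _ => rfl⟩
      refine ⟨f, ?_, ?_, ?_⟩
      · intro z hz
        rw [hfx z]
        by_cases h1 : z = x
        · rw [if_pos h1]; omega
        by_cases h2 : z = σ x
        · rw [if_neg h1, if_pos h2]; omega
        · rw [if_neg h1, if_neg h2]
          have hz' : z ∈ C' := (hmem' z).2 ⟨hz, h1, h2⟩
          have := hf'b z hz'
          omega
      · intro t ht
        rcases Nat.lt_or_ge t 2 with ht2 | ht2
        · interval_cases t
          · refine ⟨x, ⟨hxC, by rw [hfx x, if_pos rfl]⟩, ?_⟩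
            rintro y ⟨hyC, hy⟩
            rw [hfx y] at hy
            by_cases h1 : y = x
            · exact h1
            by_cases h2 : y = σ x
            · rw [if_neg h1, if_pos h2] at hy; omega
            · rw [if_neg h1, if_neg h2] at hy; omega
          · refine ⟨σ x, ⟨hσx, by rw [hfx (σ x), if_neg hxne, if_pos rfl]⟩, ?_⟩
            rintro y ⟨hyC, hy⟩
            rw [hfx y] at hy
            by_cases h1 : y = x
            · rw [if_pos h1] at hy; omega
            by_cases h2 : y = σ x
            · exact h2
            · rw [if_neg h1, if_neg h2] at hy; omega
        · obtain ⟨y, ⟨hyC', hyt⟩, hyu⟩ := hf'u (t - 2) (by omega)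
          rcases (hmem' y).1 hyC' with ⟨hyC, hy1, hy2⟩
          refine ⟨y, ⟨hyC, by rw [hfx y, if_neg hy1, if_neg hy2]; omega⟩, ?_⟩
          rintro z ⟨hzC, hz⟩
          rw [hfx z] at hz
          by_cases h1 : z = x
          · rw [if_pos h1] at hz; omega
          by_cases h2 : z = σ x
          · rw [if_neg h1, if_pos h2] at hz; omega
          · rw [if_neg h1, if_neg h2] at hz
            exact hyu z ⟨(hmem' z).2 ⟨hzC, h1, h2⟩, by omega⟩
      · intro z hzC hzne
        by_cases h1 : z = x
        · rw [h1, hfx (σ x), hfx x, if_neg hxne, if_pos rfl, if_pos rfl, bm_zero]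
          exact ⟨rfl, by omega⟩
        by_cases h2 : z = σ x
        · have hx2 : σ (σ x) = x := hinv x hxC
          rw [h2, hx2, hfx x, hfx (σ x), if_pos rfl, if_neg hxne, if_pos rfl, bm_one]
          exact ⟨rfl, by omega⟩
        · have hzC' : z ∈ C' := (hmem' z).2 ⟨hzC, h1, h2⟩
          have hσzC' : σ z ∈ C' := hσ' z hzC'
          rcases (hmem' (σ z)).1 hσzC' with ⟨_, hs1, hs2⟩
          obtain ⟨hbmeq, hbmlt⟩ := hf'bm z hzC' hzne
          rw [hfx (σ z), hfx z, if_neg hs1, if_neg hs2, if_neg h1, if_neg h2, bm_add_two]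
          omega
    · push_neg at hp
      refine ⟨fun z => if h : z ∈ C then (C.equivFin ⟨z, h⟩ : Fin _).val else C.card, ?_, ?_, ?_⟩
      · intro z hz; simp only [dif_pos hz]; exact (C.equivFin ⟨z, hz⟩).isLt
      · intro t ht
        set y := (C.equivFin.symm ⟨t, ht⟩ : C) with hy
        refine ⟨y.val, ⟨y.property, ?_⟩, ?_⟩
        · simp only [dif_pos y.property]
          have h1 : (⟨y.val, y.property⟩ : {z // z ∈ C}) = y := rfl
          rw [h1, hy, Equiv.apply_symm_apply]
        · rintro z ⟨hzC, hz⟩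
          simp only [dif_pos hzC] at hz
          have h1 : C.equivFin ⟨z, hzC⟩ = ⟨t, ht⟩ := Fin.ext hz
          have h2 := congrArg C.equivFin.symm h1
          rw [Equiv.symm_apply_apply] at h2
          exact congrArg Subtype.val h2
      · intro z hzC hzne
        exact absurd (hp z hzC) hzne


section GroupPart
open scoped Classical

variable {G : Type*} [Group G] [Fintype G] (H : Subgroup G)

noncomputable def rowF (x : G) : Finset G := Finset.univ.filter (fun y => y * x⁻¹ ∈ H)
noncomputable def colF (x : G) : Finset G := Finset.univ.filter (fun y => x⁻¹ * y ∈ H)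
noncomputable def cellF (x : G) : Finset G := rowF H x ∩ colF H x
noncomputable def dosetF (x : G) : Finset G :=
  Finset.univ.filter (fun y => ∃ h₁ ∈ H, ∃ h₂ ∈ H, y = h₁ * x * h₂)

variable {H}

theorem mem_rowF {x y : G} : y ∈ rowF H x ↔ y * x⁻¹ ∈ H := by simp [rowF]
theorem mem_colF {x y : G} : y ∈ colF H x ↔ x⁻¹ * y ∈ H := by simp [colF]
theorem mem_dosetF {x y : G} : y ∈ dosetF H x ↔ ∃ h₁ ∈ H, ∃ h₂ ∈ H, y = h₁ * x * h₂ := by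
  simp [dosetF]

theorem self_mem_rowF (x : G) : x ∈ rowF H x := mem_rowF.2 (by simpa using one_mem H)
theorem self_mem_colF (x : G) : x ∈ colF H x := mem_colF.2 (by simpa using one_mem H)
theorem self_mem_cellF (x : G) : x ∈ cellF H x :=
  Finset.mem_inter.2 ⟨self_mem_rowF x, self_mem_colF x⟩
theorem self_mem_dosetF (x : G) : x ∈ dosetF H x :=
  mem_dosetF.2 ⟨1, one_mem H, 1, one_mem H, by simp⟩

theorem rowF_eq_of_mem {x y : G} (h : y ∈ rowF H x) : rowF H y = rowF H x := by
  have hyx : y * x⁻¹ ∈ H := mem_rowF.1 h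
  ext z
  simp only [mem_rowF]
  constructor
  · intro hz
    have := mul_mem hz hyx
    simpa [mul_assoc] using this
  · intro hz
    have := mul_mem hz (inv_mem hyx)
    simpa [mul_assoc] using this

theorem colF_eq_of_mem {x y : G} (h : y ∈ colF H x) : colF H y = colF H x := by
  have hyx : x⁻¹ * y ∈ H := mem_colF.1 h
  ext z
  simp only [mem_colF]
  constructor
  · intro hz
    have := mul_mem hyx hz
    simpa [← mul_assoc] using this
  · intro hz
    have := mul_mem (inv_mem hyx) hz
    simpa [← mul_assoc, mul_assoc] using this

theorem rowF_subset_dosetF (x : G) : rowF H x ⊆ dosetF H x := by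
  intro y hy
  exact mem_dosetF.2 ⟨y * x⁻¹, mem_rowF.1 hy, 1, one_mem H, by group⟩

theorem colF_subset_dosetF (x : G) : colF H x ⊆ dosetF H x := by
  intro y hy
  exact mem_dosetF.2 ⟨1, one_mem H, x⁻¹ * y, mem_colF.1 hy, by group⟩

theorem dosetF_eq_of_mem {x y : G} (h : y ∈ dosetF H x) : dosetF H y = dosetF H x := by
  obtain ⟨h₁, hh₁, h₂, hh₂, rfl⟩ := mem_dosetF.1 h
  ext z
  simp only [mem_dosetF]
  constructor
  · rintro ⟨k₁, hk₁, k₂, hk₂, rfl⟩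
    exact ⟨k₁ * h₁, mul_mem hk₁ hh₁, h₂ * k₂, mul_mem hh₂ hk₂, by group⟩
  · rintro ⟨k₁, hk₁, k₂, hk₂, rfl⟩
    exact ⟨k₁ * h₁⁻¹, mul_mem hk₁ (inv_mem hh₁), h₂⁻¹ * k₂, mul_mem (inv_mem hh₂) hk₂, by group⟩

theorem mem_rowF_inv {x y : G} : y⁻¹ ∈ rowF H x⁻¹ ↔ y ∈ colF H x := by
  simp only [mem_rowF, mem_colF, inv_inv]
  constructor
  · intro h; simpa using inv_mem h
  · intro h; simpa using inv_mem h

theorem mem_colF_inv {x y : G} : y⁻¹ ∈ colF H x⁻¹ ↔ y ∈ rowF H x := by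
  simp only [mem_rowF, mem_colF, inv_inv]
  constructor
  · intro h; simpa using inv_mem h
  · intro h; simpa using inv_mem h

theorem mem_cellF_inv {x y : G} : y⁻¹ ∈ cellF H x⁻¹ ↔ y ∈ cellF H x := by
  simp only [cellF, Finset.mem_inter]
  rw [mem_rowF_inv, mem_colF_inv]
  tauto

theorem mem_dosetF_inv {x y : G} : y⁻¹ ∈ dosetF H x⁻¹ ↔ y ∈ dosetF H x := by
  simp only [mem_dosetF]
  constructor
  · rintro ⟨h₁, hh₁, h₂, hh₂, h⟩
    refine ⟨h₂⁻¹, inv_mem hh₂, h₁⁻¹, inv_mem hh₁, ?_⟩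
    have := congrArg (·⁻¹) h
    simpa [mul_assoc] using this
  · rintro ⟨h₁, hh₁, h₂, hh₂, rfl⟩
    exact ⟨h₂⁻¹, inv_mem hh₂, h₁⁻¹, inv_mem hh₁, by group⟩


theorem card_rowF (x : G) : (rowF H x).card = Nat.card H := by
  have himg : rowF H x = (Finset.univ.filter (fun a => a ∈ H)).image (· * x) := by
    ext y
    simp only [mem_rowF, Finset.mem_image, Finset.mem_filter, Finset.mem_univ, true_and]
    constructor
    · intro h
      exact ⟨y * x⁻¹, h, by group⟩
    · rintro ⟨h, hh, rfl⟩
      simpa using hh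
  rw [himg, Finset.card_image_of_injective _ (fun a b hab => by simpa using hab)]
  rw [← Fintype.card_subtype, Nat.card_eq_fintype_card]

theorem card_colF (x : G) : (colF H x).card = Nat.card H := by
  have himg : colF H x = (Finset.univ.filter (fun a => a ∈ H)).image (x * ·) := by
    ext y
    simp only [mem_colF, Finset.mem_image, Finset.mem_filter, Finset.mem_univ, true_and]
    constructor
    · intro h
      exact ⟨x⁻¹ * y, h, by group⟩
    · rintro ⟨h, hh, rfl⟩
      simpa using hh
  rw [himg, Finset.card_image_of_injective _ (fun a b hab => by simpa using hab)]
  rw [← Fintype.card_subtype, Nat.card_eq_fintype_card]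

/-- Any row and any column inside a common double coset intersect. -/
theorem rowF_inter_colF_nonempty {x u w : G} (hu : u ∈ dosetF H x) (hw : w ∈ dosetF H x) :
    ∃ z, z ∈ rowF H u ∩ colF H w := by
  obtain ⟨h₁, hh₁, h₂, hh₂, rfl⟩ := mem_dosetF.1 hu
  obtain ⟨h₃, hh₃, h₄, hh₄, rfl⟩ := mem_dosetF.1 hw
  refine ⟨h₃ * x * h₂, Finset.mem_inter.2 ⟨mem_rowF.2 ?_, mem_colF.2 ?_⟩⟩
  · have he : (h₃ * x * h₂) * (h₁ * x * h₂)⁻¹ = h₃ * h₁⁻¹ := by group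
    rw [he]; exact mul_mem hh₃ (inv_mem hh₁)
  · have he : (h₃ * x * h₄)⁻¹ * (h₃ * x * h₂) = h₄⁻¹ * h₂ := by group
    rw [he]; exact mul_mem (inv_mem hh₄) hh₂

/-- Cells within a double coset all have the same cardinality. -/
theorem card_cellF_of_mem {x y : G} (h : y ∈ dosetF H x) :
    (cellF H y).card = (cellF H x).card := by
  obtain ⟨h₁, hh₁, h₂, hh₂, rfl⟩ := mem_dosetF.1 h
  apply Finset.card_bij (fun z _ => h₁⁻¹ * z * h₂⁻¹)
  · intro z hz
    rcases Finset.mem_inter.1 hz with ⟨hz1, hz2⟩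
    have hz1' : z * (h₁ * x * h₂)⁻¹ ∈ H := mem_rowF.1 hz1
    have hz2' : (h₁ * x * h₂)⁻¹ * z ∈ H := mem_colF.1 hz2
    refine Finset.mem_inter.2 ⟨mem_rowF.2 ?_, mem_colF.2 ?_⟩
    · have he : (h₁⁻¹ * z * h₂⁻¹) * x⁻¹ = h₁⁻¹ * (z * (h₁ * x * h₂)⁻¹) * h₁ := by group
      rw [he]
      exact mul_mem (mul_mem (inv_mem hh₁) hz1') hh₁
    · have he : x⁻¹ * (h₁⁻¹ * z * h₂⁻¹) = h₂ * ((h₁ * x * h₂)⁻¹ * z) * h₂⁻¹ := by group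
      rw [he]
      exact mul_mem (mul_mem hh₂ hz2') (inv_mem hh₂)
  · intro a ha b hb hab
    have h2 := congrArg (fun z => h₁ * z * h₂) hab
    simpa [mul_assoc] using h2
  · intro w hw
    rcases Finset.mem_inter.1 hw with ⟨hw1, hw2⟩
    have hw1' : w * x⁻¹ ∈ H := mem_rowF.1 hw1
    have hw2' : x⁻¹ * w ∈ H := mem_colF.1 hw2
    refine ⟨h₁ * w * h₂, ?_, by group⟩
    refine Finset.mem_inter.2 ⟨mem_rowF.2 ?_, mem_colF.2 ?_⟩
    · have he : (h₁ * w * h₂) * (h₁ * x * h₂)⁻¹ = h₁ * (w * x⁻¹) * h₁⁻¹ := by group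
      rw [he]
      exact mul_mem (mul_mem hh₁ hw1') (inv_mem hh₁)
    · have he : (h₁ * x * h₂)⁻¹ * (h₁ * w * h₂) = h₂⁻¹ * (x⁻¹ * w) * h₂ := by group
      rw [he]
      exact mul_mem (mul_mem (inv_mem hh₂) hw2') hh₂

theorem cellF_eq_inter {z u w : G} (h1 : z ∈ rowF H u) (h2 : z ∈ colF H w) :
    cellF H z = rowF H u ∩ colF H w := by
  rw [cellF, rowF_eq_of_mem h1, colF_eq_of_mem h2]


theorem equivFin_val_congr {β : Type*} {s t : Finset β} (h : s = t) {a : β} (ha : a ∈ s)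
    (ha' : a ∈ t) : ((s.equivFin ⟨a, ha⟩ : Fin _)).val = ((t.equivFin ⟨a, ha'⟩ : Fin _)).val := by
  subst h; rfl

variable (H)

noncomputable def rowsF (x : G) : Finset (Finset G) := (dosetF H x).image (rowF H)
noncomputable def dd (x : G) : ℕ := (rowsF H x).card
noncomputable def ll (x : G) : ℕ := (cellF H x).card

variable {H}

theorem rowF_mem_rowsF (x : G) : rowF H x ∈ rowsF H x :=
  Finset.mem_image.2 ⟨x, self_mem_dosetF x, rfl⟩

variable (H)

noncomputable def ind (x : G) : ℕ :=
  ((rowsF H x).equivFin ⟨rowF H x, rowF_mem_rowsF x⟩ : Fin _).val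

variable {H}

theorem rowsF_eq_of_mem {x y : G} (h : y ∈ dosetF H x) : rowsF H y = rowsF H x := by
  rw [rowsF, rowsF, dosetF_eq_of_mem h]

theorem ind_lt_dd (x : G) : ind H x < dd H x := Fin.isLt _

theorem ind_eq_iff {x y z : G} (hy : y ∈ dosetF H x) (hz : z ∈ dosetF H x) :
    ind H y = ind H z ↔ rowF H y = rowF H z := by
  have h1 : rowsF H y = rowsF H x := rowsF_eq_of_mem hy
  have h2 : rowsF H z = rowsF H x := rowsF_eq_of_mem hz
  have hy' : rowF H y ∈ rowsF H x := h1 ▸ rowF_mem_rowsF y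
  have hz' : rowF H z ∈ rowsF H x := h2 ▸ rowF_mem_rowsF z
  have e1 : ind H y = ((rowsF H x).equivFin ⟨rowF H y, hy'⟩ : Fin _).val :=
    equivFin_val_congr h1 _ _
  have e2 : ind H z = ((rowsF H x).equivFin ⟨rowF H z, hz'⟩ : Fin _).val :=
    equivFin_val_congr h2 _ _
  rw [e1, e2]
  constructor
  · intro hv
    have h3 : (rowsF H x).equivFin ⟨rowF H y, hy'⟩ = (rowsF H x).equivFin ⟨rowF H z, hz'⟩ :=
      Fin.ext hv
    have h4 := (rowsF H x).equivFin.injective h3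
    exact congrArg Subtype.val h4
  · intro hrow
    have h3 : (⟨rowF H y, hy'⟩ : {R // R ∈ rowsF H x}) = ⟨rowF H z, hz'⟩ := Subtype.ext hrow
    rw [h3]

theorem ind_surj {x : G} {k : ℕ} (hk : k < dd H x) : ∃ y ∈ dosetF H x, ind H y = k := by
  set R := (rowsF H x).equivFin.symm ⟨k, hk⟩ with hR
  obtain ⟨y, hy, hRy⟩ := Finset.mem_image.1 R.property
  refine ⟨y, hy, ?_⟩
  have h1 : rowsF H y = rowsF H x := rowsF_eq_of_mem hy
  have hy' : rowF H y ∈ rowsF H x := h1 ▸ rowF_mem_rowsF y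
  have e1 : ind H y = ((rowsF H x).equivFin ⟨rowF H y, hy'⟩ : Fin _).val :=
    equivFin_val_congr h1 _ _
  have h3 : (⟨rowF H y, hy'⟩ : {S // S ∈ rowsF H x}) = R := Subtype.ext hRy
  rw [e1, h3, hR, Equiv.apply_symm_apply]

theorem rowF_eq_iff_mem {y z : G} : rowF H y = rowF H z ↔ y ∈ rowF H z :=
  ⟨fun h => h ▸ self_mem_rowF y, fun h => rowF_eq_of_mem h⟩

theorem dosetF_inv_eq_image (x : G) : dosetF H x⁻¹ = (dosetF H x).image (·⁻¹) := by
  ext z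
  rw [Finset.mem_image]
  constructor
  · intro hz
    refine ⟨z⁻¹, ?_, by simp⟩
    have h1 : z⁻¹⁻¹ ∈ dosetF H x⁻¹ := by simpa using hz
    exact mem_dosetF_inv.1 h1
  · rintro ⟨w, hw, rfl⟩
    exact mem_dosetF_inv.2 hw

theorem rowsF_pairwise_disjoint (x : G) :
    ∀ R ∈ rowsF H x, ∀ S ∈ rowsF H x, R ≠ S → Disjoint R S := by
  intro R hR S hS hne
  obtain ⟨u, _, rfl⟩ := Finset.mem_image.1 hR
  obtain ⟨v, _, rfl⟩ := Finset.mem_image.1 hS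
  rw [Finset.disjoint_left]
  intro z hzu hzv
  exact hne ((rowF_eq_of_mem hzu).symm.trans (rowF_eq_of_mem hzv))

theorem dosetF_eq_biUnion (x : G) : dosetF H x = (rowsF H x).biUnion (fun R => R) := by
  ext z
  rw [Finset.mem_biUnion]
  constructor
  · intro hz
    exact ⟨rowF H z, Finset.mem_image.2 ⟨z, hz, rfl⟩, self_mem_rowF z⟩
  · rintro ⟨R, hR, hzR⟩
    obtain ⟨u, hu, rfl⟩ := Finset.mem_image.1 hR
    have : rowF H z = rowF H u := rowF_eq_of_mem hzR
    exact (dosetF_eq_of_mem hu) ▸ (rowF_subset_dosetF u hzR)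

theorem card_dosetF (x : G) : (dosetF H x).card = dd H x * Nat.card H := by
  rw [dosetF_eq_biUnion x, Finset.card_biUnion (rowsF_pairwise_disjoint x)]
  rw [Finset.sum_congr rfl (fun R hR => ?_), Finset.sum_const, smul_eq_mul]
  · rfl
  · obtain ⟨u, _, rfl⟩ := Finset.mem_image.1 hR
    exact card_rowF u

theorem dd_inv (x : G) : dd H x⁻¹ = dd H x := by
  have h1 : (dosetF H x⁻¹).card = (dosetF H x).card := by
    rw [dosetF_inv_eq_image x, Finset.card_image_of_injective _ inv_injective]
  have h2 := card_dosetF (H := H) x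
  have h3 := card_dosetF (H := H) x⁻¹
  have hn : 0 < Nat.card H := Nat.card_pos
  exact Nat.eq_of_mul_eq_mul_right hn (by rw [← h2, ← h3, h1])

theorem cellF_inv_eq_image (x : G) : cellF H x⁻¹ = (cellF H x).image (·⁻¹) := by
  ext z
  rw [Finset.mem_image]
  constructor
  · intro hz
    refine ⟨z⁻¹, ?_, by simp⟩
    have h1 : z⁻¹⁻¹ ∈ cellF H x⁻¹ := by simpa using hz
    exact mem_cellF_inv.1 h1
  · rintro ⟨w, hw, rfl⟩
    exact mem_cellF_inv.2 hw

theorem ll_inv (x : G) : ll H x⁻¹ = ll H x := by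
  rw [ll, ll, cellF_inv_eq_image x, Finset.card_image_of_injective _ inv_injective]

theorem ll_eq_of_mem {x y : G} (h : y ∈ dosetF H x) : ll H y = ll H x := card_cellF_of_mem h

theorem dd_eq_of_mem {x y : G} (h : y ∈ dosetF H x) : dd H y = dd H x := by
  rw [dd, dd, rowsF_eq_of_mem h]


theorem modarith_inv (d i j : ℕ) (hi : i < d) (hj : j < d) :
    (i + d - j) % d = (d - (j + d - i) % d) % d := by
  rcases eq_or_ne i j with rfl | hne
  · rw [show i + d - i = d from by omega, Nat.mod_self, Nat.sub_zero, Nat.mod_self]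
  · rcases Ne.lt_or_gt hne with hij | hij
    · have h1 : (i + d - j) % d = i + d - j := Nat.mod_eq_of_lt (by omega)
      have h2 : j + d - i = d + (j - i) := by omega
      have h3 : (j + d - i) % d = j - i := by
        rw [h2, Nat.add_mod_left, Nat.mod_eq_of_lt (by omega)]
      rw [h1, h3, Nat.mod_eq_of_lt (by omega)]
      omega
    · have h1 : i + d - j = d + (i - j) := by omega
      have h2 : (i + d - j) % d = i - j := by
        rw [h1, Nat.add_mod_left, Nat.mod_eq_of_lt (by omega)]
      have h3 : (j + d - i) % d = j + d - i := Nat.mod_eq_of_lt (by omega)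
      rw [h2, h3, Nat.mod_eq_of_lt (by omega)]
      omega

theorem modarith_shift (d i j k : ℕ) (hi : i < d) (hj : j < d) (hk : k < d) :
    (j + d - i) % d = k ↔ j = (i + k) % d := by
  constructor
  · intro h
    have h2 : (i + (j + d - i) % d) % d = j := by
      have e1 : (i + (j + d - i) % d) % d = (i + (j + d - i)) % d := by
        conv_lhs => rw [Nat.add_mod]
        conv_rhs => rw [Nat.add_mod]
        rw [Nat.mod_mod_of_dvd _ dvd_rfl]
      rw [e1, show i + (j + d - i) = j + d from by omega, Nat.add_mod_right,
        Nat.mod_eq_of_lt hj]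
    rw [← h, h2]
  · rintro rfl
    rcases Nat.lt_or_ge (i + k) d with h | h
    · rw [Nat.mod_eq_of_lt h, show i + k + d - i = k + d from by omega, Nat.add_mod_right,
        Nat.mod_eq_of_lt hk]
    · have h1 : (i + k) % d = i + k - d := by
        rw [Nat.mod_eq_sub_mod h, Nat.mod_eq_of_lt (by omega)]
      rw [h1, show i + k - d + d - i = k from by omega, Nat.mod_eq_of_lt hk]

/-- injective code on finsets -/
noncomputable def ocode : Finset G → ℕ := fun C => ((Fintype.equivFin (Finset G)) C).val

theorem ocode_inj {C D : Finset G} (h : ocode C = ocode D) : C = D :=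
  (Fintype.equivFin (Finset G)).injective (Fin.ext h)

theorem exists_cell_labeling (C : Finset G) :
    ∃ f : G → ℕ, (∀ x ∈ C, f x < C.card) ∧ (∀ t < C.card, ∃! x, x ∈ C ∧ f x = t) ∧
      ((∀ x ∈ C, x⁻¹ ∈ C) → ∀ x ∈ C, x⁻¹ ≠ x → f x⁻¹ = bm (f x) ∧ bm (f x) < C.card) := by
  by_cases hsym : ∀ x ∈ C, x⁻¹ ∈ C
  · obtain ⟨f, h1, h2, h3⟩ := exists_bm_labeling (σ := fun z => z⁻¹) C hsym
      (fun x _ => inv_inv x)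
    exact ⟨f, h1, h2, fun _ => h3⟩
  · refine ⟨fun z => if h : z ∈ C then ((C.equivFin ⟨z, h⟩ : Fin _)).val else 0, ?_, ?_, ?_⟩
    · intro z hz; simp only [dif_pos hz]; exact (C.equivFin ⟨z, hz⟩).isLt
    · intro t ht
      set y := (C.equivFin.symm ⟨t, ht⟩ : C) with hy
      refine ⟨y.val, ⟨y.property, ?_⟩, ?_⟩
      · simp only [dif_pos y.property]
        have h1 : (⟨y.val, y.property⟩ : {z // z ∈ C}) = y := rfl
        rw [h1, hy, Equiv.apply_symm_apply]
      · rintro z ⟨hzC, hz⟩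
        simp only [dif_pos hzC] at hz
        have h1 : C.equivFin ⟨z, hzC⟩ = ⟨t, ht⟩ := Fin.ext hz
        have h2 := congrArg C.equivFin.symm h1
        rw [Equiv.symm_apply_apply] at h2
        exact congrArg Subtype.val h2
    · intro h; exact absurd h hsym

noncomputable def psiF (C : Finset G) : G → ℕ := Classical.choose (exists_cell_labeling C)

theorem psiF_spec (C : Finset G) :
    (∀ x ∈ C, psiF C x < C.card) ∧ (∀ t < C.card, ∃! x, x ∈ C ∧ psiF C x = t) ∧
      ((∀ x ∈ C, x⁻¹ ∈ C) → ∀ x ∈ C, x⁻¹ ≠ x →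
        psiF C x⁻¹ = bm (psiF C x) ∧ bm (psiF C x) < C.card) :=
  Classical.choose_spec (exists_cell_labeling C)

variable (H)

noncomputable def labelF (x : G) : ℕ :=
  if ocode (cellF H x) ≤ ocode (cellF H x⁻¹) then psiF (cellF H x) x else psiF (cellF H x⁻¹) x⁻¹

noncomputable def delF (x : G) : ℕ := (ind H x⁻¹ + dd H x - ind H x) % dd H x

variable {H}

theorem dd_pos (x : G) : 0 < dd H x := Finset.card_pos.2 ⟨rowF H x, rowF_mem_rowsF x⟩

theorem delF_lt (x : G) : delF H x < dd H x := Nat.mod_lt _ (dd_pos x)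

theorem ind_inv_lt (x : G) : ind H x⁻¹ < dd H x := by
  have := ind_lt_dd (H := H) x⁻¹
  rwa [dd_inv] at this

theorem delF_inv (x : G) : delF H x⁻¹ = (dd H x - delF H x) % dd H x := by
  rw [delF, delF, dd_inv, inv_inv]
  exact modarith_inv (dd H x) (ind H x) (ind H x⁻¹) (ind_lt_dd x) (ind_inv_lt x)

theorem cellF_eq_of_mem {u z : G} (h : z ∈ cellF H u) : cellF H z = cellF H u := by
  rcases Finset.mem_inter.1 h with ⟨h1, h2⟩
  exact cellF_eq_inter h1 h2

theorem cellF_inv_eq_of_mem {u z : G} (h : z ∈ cellF H u) : cellF H z⁻¹ = cellF H u⁻¹ := by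
  rw [cellF_inv_eq_image z, cellF_inv_eq_image u, cellF_eq_of_mem h]

theorem mem_cellF_inv' {u z : G} (h : z ∈ cellF H u) : z⁻¹ ∈ cellF H u⁻¹ := by
  rw [cellF_inv_eq_image u]
  exact Finset.mem_image.2 ⟨z, h, rfl⟩

/-- the label restricted to any cell is a bijection onto `range (ll)`. -/
theorem labelF_unique {u : G} {t : ℕ} (ht : t < ll H u) :
    ∃! z, z ∈ cellF H u ∧ labelF H z = t := by
  by_cases hb : ocode (cellF H u) ≤ ocode (cellF H u⁻¹)
  · obtain ⟨x, ⟨hxC, hxt⟩, huniq⟩ := (psiF_spec (cellF H u)).2.1 t ht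
    have hlab : ∀ z ∈ cellF H u, labelF H z = psiF (cellF H u) z := by
      intro z hz
      simp only [labelF]
      rw [cellF_eq_of_mem hz, cellF_inv_eq_of_mem hz, if_pos hb]
    refine ⟨x, ⟨hxC, by rw [hlab x hxC]; exact hxt⟩, ?_⟩
    rintro z ⟨hzC, hzt⟩
    rw [hlab z hzC] at hzt
    exact huniq z ⟨hzC, hzt⟩
  · have htl : t < ll H u⁻¹ := by rwa [ll_inv]
    obtain ⟨x, ⟨hxC, hxt⟩, huniq⟩ := (psiF_spec (cellF H u⁻¹)).2.1 t htl
    have hlab : ∀ z ∈ cellF H u, labelF H z = psiF (cellF H u⁻¹) z⁻¹ := by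
      intro z hz
      simp only [labelF]
      rw [cellF_eq_of_mem hz, cellF_inv_eq_of_mem hz, if_neg hb]
    have hxinv : x⁻¹ ∈ cellF H u := by
      have h1 := mem_cellF_inv' hxC
      rwa [inv_inv] at h1
    refine ⟨x⁻¹, ⟨hxinv, ?_⟩, ?_⟩
    · rw [hlab x⁻¹ hxinv, inv_inv]; exact hxt
    · rintro z ⟨hzC, hzt⟩
      rw [hlab z hzC] at hzt
      have := huniq z⁻¹ ⟨mem_cellF_inv' hzC, hzt⟩
      rw [← this, inv_inv]

theorem labelF_inv_of_ne {x : G} (h : cellF H x ≠ cellF H x⁻¹) :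
    labelF H x⁻¹ = labelF H x := by
  simp only [labelF, inv_inv]
  rcases Nat.lt_or_ge (ocode (cellF H x)) (ocode (cellF H x⁻¹)) with hlt | hge
  · rw [if_neg (not_le.2 hlt), if_pos (le_of_lt hlt)]
  · have hne : ocode (cellF H x) ≠ ocode (cellF H x⁻¹) := fun he => h (ocode_inj he)
    have hgt : ocode (cellF H x⁻¹) < ocode (cellF H x) := by omega
    rw [if_pos (le_of_lt hgt), if_neg (not_le.2 hgt)]

theorem labelF_inv_of_eq {x : G} (h : cellF H x = cellF H x⁻¹) (hne : x⁻¹ ≠ x) :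
    labelF H x⁻¹ = bm (labelF H x) ∧ bm (labelF H x) < ll H x := by
  have hcc : cellF H x⁻¹⁻¹ = cellF H x := by rw [inv_inv]
  have hsym : ∀ z ∈ cellF H x, z⁻¹ ∈ cellF H x := by
    intro z hz
    have := mem_cellF_inv' hz
    rwa [← h] at this
  have hb1 : labelF H x = psiF (cellF H x) x := by
    simp only [labelF]
    rw [← h, if_pos le_rfl]
  have hb2 : labelF H x⁻¹ = psiF (cellF H x) x⁻¹ := by
    simp only [labelF, inv_inv]
    rw [← h, if_pos le_rfl]
  obtain ⟨he, hlt⟩ := (psiF_spec (cellF H x)).2.2 hsym x (self_mem_cellF x) hne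
  exact ⟨by rw [hb1, hb2]; exact he, by rw [hb1]; exact hlt⟩


theorem mem_colF_inv_iff {v z : G} : z ∈ colF H v⁻¹ ↔ z⁻¹ ∈ rowF H v := by
  have h := mem_rowF_inv (H := H) (x := v⁻¹) (y := z)
  rw [inv_inv] at h
  exact h.symm

theorem fiber_mem_iff {u v z : G} (hv : v ∈ dosetF H u⁻¹) (hz : z ∈ rowF H u) :
    ind H z⁻¹ = ind H v ↔ z ∈ colF H v⁻¹ := by
  have hz' : z⁻¹ ∈ dosetF H u⁻¹ := mem_dosetF_inv.2 (rowF_subset_dosetF u hz)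
  rw [ind_eq_iff hz' hv, rowF_eq_iff_mem]
  exact mem_colF_inv_iff.symm

theorem dosetF_inv_mem {u v : G} (hv : v ∈ dosetF H u⁻¹) : v⁻¹ ∈ dosetF H u := by
  rw [dosetF_inv_eq_image] at hv
  obtain ⟨w, hw, rfl⟩ := Finset.mem_image.1 hv
  simpa using hw

theorem card_fiber {u v : G} (hv : v ∈ dosetF H u⁻¹) :
    ((rowF H u).filter (fun z => ind H z⁻¹ = ind H v)).card = ll H u := by
  have hfe : (rowF H u).filter (fun z => ind H z⁻¹ = ind H v) = rowF H u ∩ colF H v⁻¹ := by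
    ext z
    simp only [Finset.mem_filter, Finset.mem_inter]
    constructor
    · rintro ⟨h1, h2⟩; exact ⟨h1, (fiber_mem_iff hv h1).1 h2⟩
    · rintro ⟨h1, h2⟩; exact ⟨h1, (fiber_mem_iff hv h1).2 h2⟩
  obtain ⟨z₀, hz₀⟩ := rowF_inter_colF_nonempty (self_mem_dosetF u) (dosetF_inv_mem hv)
  rcases Finset.mem_inter.1 hz₀ with ⟨hz₀r, hz₀c⟩
  rw [hfe, ← cellF_eq_inter hz₀r hz₀c]
  exact card_cellF_of_mem (rowF_subset_dosetF u hz₀r)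

theorem ind_inv_lt_of_mem {u z : G} (hz : z ∈ rowF H u) : ind H z⁻¹ < dd H u := by
  have h1 := ind_lt_dd (H := H) z⁻¹
  have hz' : z⁻¹ ∈ dosetF H u⁻¹ := mem_dosetF_inv.2 (rowF_subset_dosetF u hz)
  rwa [dd_eq_of_mem hz', dd_inv] at h1

theorem nat_card_eq_dd_mul_ll (u : G) : Nat.card H = dd H u * ll H u := by
  have hmaps : ∀ z ∈ rowF H u, ind H z⁻¹ ∈ Finset.range (dd H u) := by
    intro z hz
    rw [Finset.mem_range]
    exact ind_inv_lt_of_mem hz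
  have h := Finset.card_eq_sum_card_fiberwise hmaps
  rw [card_rowF] at h
  have h2 : ∀ k ∈ Finset.range (dd H u),
      ((rowF H u).filter (fun z => ind H z⁻¹ = k)).card = ll H u := by
    intro k hk
    obtain ⟨v, hv, hvk⟩ := ind_surj (x := u⁻¹) (k := k)
      (by rw [dd_inv]; exact Finset.mem_range.1 hk)
    rw [← hvk]
    exact card_fiber hv
  rw [h, Finset.sum_congr rfl h2, Finset.sum_const, Finset.card_range, smul_eq_mul]

theorem row_fiber_unique {u : G} {k t : ℕ} (hk : k < dd H u) (ht : t < ll H u) :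
    ∃! z, z ∈ rowF H u ∧ delF H z = k ∧ labelF H z = t := by
  have hk' : (ind H u + k) % dd H u < dd H u := Nat.mod_lt _ (dd_pos u)
  obtain ⟨v, hv, hvk⟩ := ind_surj (x := u⁻¹) (k := (ind H u + k) % dd H u)
    (by rw [dd_inv]; exact hk')
  have hchar : ∀ z, z ∈ rowF H u → (delF H z = k ↔ ind H z⁻¹ = ind H v) := by
    intro z hz
    have hzd : z ∈ dosetF H u := rowF_subset_dosetF u hz
    have hind : ind H z = ind H u :=
      (ind_eq_iff hzd (self_mem_dosetF u)).2 (rowF_eq_of_mem hz)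
    have hdd : dd H z = dd H u := dd_eq_of_mem hzd
    rw [delF, hind, hdd, hvk]
    exact modarith_shift (dd H u) (ind H u) (ind H z⁻¹) k (ind_lt_dd u)
      (ind_inv_lt_of_mem hz) hk
  obtain ⟨z₀, hz₀⟩ := rowF_inter_colF_nonempty (self_mem_dosetF u) (dosetF_inv_mem hv)
  rcases Finset.mem_inter.1 hz₀ with ⟨hz₀r, hz₀c⟩
  have hcell : cellF H z₀ = rowF H u ∩ colF H v⁻¹ := cellF_eq_inter hz₀r hz₀c
  have hll : ll H z₀ = ll H u := ll_eq_of_mem (rowF_subset_dosetF u hz₀r)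
  obtain ⟨w₀, ⟨hw₀c, hw₀l⟩, hwu⟩ := labelF_unique (u := z₀) (t := t) (by rw [hll]; exact ht)
  have hmem : ∀ z, (z ∈ rowF H u ∧ delF H z = k ∧ labelF H z = t) ↔
      (z ∈ cellF H z₀ ∧ labelF H z = t) := by
    intro z
    constructor
    · rintro ⟨h1, h2, h3⟩
      refine ⟨?_, h3⟩
      rw [hcell]
      exact Finset.mem_inter.2 ⟨h1, (fiber_mem_iff hv h1).1 ((hchar z h1).1 h2)⟩
    · rintro ⟨h1, h3⟩
      rw [hcell] at h1
      rcases Finset.mem_inter.1 h1 with ⟨hr, hc⟩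
      exact ⟨hr, (hchar z hr).2 ((fiber_mem_iff hv hr).2 hc), h3⟩
  exact ⟨w₀, (hmem w₀).2 ⟨hw₀c, hw₀l⟩, fun z hz => hwu z ((hmem z).1 hz)⟩

theorem card_row_filter_B {u : G} (B : Finset (ℕ × ℕ))
    (hB : B ⊆ (Finset.range (dd H u)) ×ˢ (Finset.range (ll H u))) :
    ((rowF H u).filter (fun z => (delF H z, labelF H z) ∈ B)).card = B.card := by
  set s := (rowF H u).filter (fun z => (delF H z, labelF H z) ∈ B) with hs
  have hmaps : ∀ z ∈ s, (delF H z, labelF H z) ∈ B := fun z hz => (Finset.mem_filter.1 hz).2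
  rw [Finset.card_eq_sum_card_fiberwise hmaps]
  have h1 : ∀ p ∈ B, (s.filter (fun z => (delF H z, labelF H z) = p)).card = 1 := by
    intro p hp
    rcases Finset.mem_product.1 (hB hp) with ⟨hp1, hp2⟩
    obtain ⟨z₀, hz₀, huniq⟩ := row_fiber_unique (u := u) (k := p.1) (t := p.2)
        (Finset.mem_range.1 hp1) (Finset.mem_range.1 hp2)
    rw [Finset.card_eq_one]
    refine ⟨z₀, ?_⟩
    ext z
    simp only [Finset.mem_filter, Finset.mem_singleton, hs]
    constructor
    · rintro ⟨⟨hzr, hzB⟩, hzp⟩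
      refine huniq z ⟨hzr, ?_, ?_⟩
      · rw [← hzp]
      · rw [← hzp]
    · rintro rfl
      rcases hz₀ with ⟨hm1, hm2, hm3⟩
      have he : (delF H z, labelF H z) = p := by rw [hm2, hm3]
      exact ⟨⟨hm1, by rw [he]; exact hp⟩, he⟩
  rw [Finset.sum_congr rfl h1, Finset.sum_const, smul_eq_mul, mul_one]

def iota (d l : ℕ) (p : ℕ × ℕ) : ℕ × ℕ :=
  if p.1 = 0 then (0, if bm p.2 < l then bm p.2 else p.2) else (d - p.1, p.2)

theorem iota_apply (d l k t : ℕ) :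
    iota d l (k, t) = if k = 0 then (0, if bm t < l then bm t else t) else (d - k, t) := rfl

theorem iota_mem {d l : ℕ} {p : ℕ × ℕ}
    (hp : p ∈ (Finset.range d) ×ˢ (Finset.range l)) :
    iota d l p ∈ (Finset.range d) ×ˢ (Finset.range l) := by
  obtain ⟨k, t⟩ := p
  rcases Finset.mem_product.1 hp with ⟨hk, ht⟩
  rw [Finset.mem_range] at hk ht
  rw [iota_apply]
  split_ifs with h1 h2
  · exact Finset.mem_product.2 ⟨Finset.mem_range.2 (by omega), Finset.mem_range.2 h2⟩
  · exact Finset.mem_product.2 ⟨Finset.mem_range.2 (by omega), Finset.mem_range.2 ht⟩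
  · exact Finset.mem_product.2 ⟨Finset.mem_range.2 (by omega), Finset.mem_range.2 ht⟩

theorem iota_iota {d l : ℕ} {p : ℕ × ℕ}
    (hp : p ∈ (Finset.range d) ×ˢ (Finset.range l)) :
    iota d l (iota d l p) = p := by
  obtain ⟨k, t⟩ := p
  rcases Finset.mem_product.1 hp with ⟨hk, ht⟩
  rw [Finset.mem_range] at hk ht
  by_cases h1 : k = 0
  · by_cases h2 : bm t < l
    · rw [iota_apply d l k t, if_pos h1, if_pos h2, iota_apply d l 0 (bm t), if_pos rfl,
        bm_bm, if_pos ht, h1]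
    · rw [iota_apply d l k t, if_pos h1, if_neg h2, iota_apply d l 0 t, if_pos rfl,
        if_neg h2, h1]
  · rw [iota_apply d l k t, if_neg h1, iota_apply d l (d - k) t, if_neg (by omega),
      show d - (d - k) = k from by omega]

variable (H)

noncomputable def clsF (x : G) : Finset G := dosetF H x ∪ dosetF H x⁻¹

variable {H}

theorem self_mem_clsF (x : G) : x ∈ clsF H x := Finset.mem_union_left _ (self_mem_dosetF x)

theorem clsF_inv (x : G) : clsF H x⁻¹ = clsF H x := by
  rw [clsF, clsF, inv_inv, Finset.union_comm]

theorem clsF_eq_of_mem {x y : G} (h : y ∈ clsF H x) : clsF H y = clsF H x := by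
  rcases Finset.mem_union.1 h with h1 | h1
  · have h2 : y⁻¹ ∈ dosetF H x⁻¹ := mem_dosetF_inv.2 h1
    rw [clsF, clsF, dosetF_eq_of_mem h1, dosetF_eq_of_mem h2]
  · have h2 : y⁻¹ ∈ dosetF H x⁻¹⁻¹ := mem_dosetF_inv.2 h1
    rw [inv_inv] at h2
    rw [clsF, clsF, dosetF_eq_of_mem h1, dosetF_eq_of_mem h2, Finset.union_comm]

theorem dd_cls_const {x y : G} (h : y ∈ clsF H x) : dd H y = dd H x := by
  rcases Finset.mem_union.1 h with h1 | h1
  · exact dd_eq_of_mem h1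
  · rw [dd_eq_of_mem h1, dd_inv]

theorem ll_cls_const {x y : G} (h : y ∈ clsF H x) : ll H y = ll H x := by
  rcases Finset.mem_union.1 h with h1 | h1
  · exact ll_eq_of_mem h1
  · rw [ll_eq_of_mem h1, ll_inv]

theorem mem_H_of_rowF {u z : G} (hz : z ∈ rowF H u) (hzH : z ∈ H) : u ∈ H := by
  have h1 : z * u⁻¹ ∈ H := mem_rowF.1 hz
  have h2 : u = (z * u⁻¹)⁻¹ * z := by group
  rw [h2]; exact mul_mem (inv_mem h1) hzH

theorem delF_eq_zero_of_row_inv {x : G} (h : x⁻¹ ∈ rowF H x) :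
    delF H x = 0 ∧ delF H x⁻¹ = 0 := by
  have hx : x⁻¹ ∈ dosetF H x := rowF_subset_dosetF x h
  have hind : ind H x⁻¹ = ind H x := (ind_eq_iff hx (self_mem_dosetF x)).2 (rowF_eq_of_mem h)
  constructor
  · rw [delF, hind, show ind H x + dd H x - ind H x = dd H x from by omega, Nat.mod_self]
  · rw [delF, inv_inv, dd_inv, hind,
      show ind H x + dd H x - ind H x = dd H x from by omega, Nat.mod_self]

end GroupPart
end Stmt11Aux

open scoped Pointwise

open Stmt11Aux

theorem stmt11 {G : Type*} [Group G] [Fintype G] (H : Subgroup G) (hH : H ≠ ⊥) :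
    ∀ a b : ℕ, a ≤ Nat.card H - 1 → b ≤ Nat.card H → Even b →
      Nat.gcd 2 (Nat.card H - 1) ∣ a →
      ∃ S : Set G, S ⊆ {1}ᶜ ∧ S⁻¹ = S ∧
        (∀ v ∈ (H : Set G), {h ∈ (H : Set G) | h * v⁻¹ ∈ S}.ncard = a) ∧
        (∀ v ∉ (H : Set G), {h ∈ (H : Set G) | h * v⁻¹ ∈ S}.ncard = b) := by
  classical
  intro a b ha hbn hbeven hgcd
  -- Part I : the inside part S1
  set s1 : Finset G := (Finset.univ.filter (fun x : G => x ∈ H)).erase 1 with hs1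
  have hs1mem : ∀ x : G, x ∈ s1 ↔ x ≠ 1 ∧ x ∈ H := by
    intro x
    simp [hs1, Finset.mem_erase]
  have hs1card : s1.card = Nat.card H - 1 := by
    rw [hs1, Finset.card_erase_of_mem (by simp [one_mem]), ← Fintype.card_subtype,
      Nat.card_eq_fintype_card]
  have hs1σ : ∀ x ∈ s1, x⁻¹ ∈ s1 := by
    intro x hx
    rcases (hs1mem x).1 hx with ⟨hx1, hxH⟩
    exact (hs1mem _).2 ⟨fun h => hx1 (by rw [← inv_inv x, h, inv_one]), inv_mem hxH⟩
  have hs1inv : ∀ x ∈ s1, ((x : G)⁻¹)⁻¹ = x := fun x _ => inv_inv x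
  have hpar : Even a ∨ ∃ x ∈ s1, x⁻¹ = x := by
    rcases Nat.even_or_odd (Nat.card H - 1) with he | ho
    · left
      have h2 : (2 : ℕ) ∣ (Nat.card H - 1) := by
        rcases he with ⟨m, hm⟩; exact ⟨m, by omega⟩
      rw [Nat.gcd_eq_left h2] at hgcd
      rcases hgcd with ⟨c, hc⟩
      exact ⟨c, by omega⟩
    · right
      by_contra hno
      push_neg at hno
      have hev := even_card_of_symm (fun z : G => z⁻¹) s1 hs1σ hs1inv hno
      rw [hs1card] at hev
      rcases ho with ⟨m, hm⟩
      rcases hev with ⟨m', hm'⟩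
      omega
  obtain ⟨S1, hS1sub, hS1card, hS1cl⟩ := exists_symm_subset (fun z : G => z⁻¹) a s1 hs1σ hs1inv
    (by rw [hs1card]; exact ha) hpar
  -- Part II : the outside part S2
  have hBsel : ∀ F : Finset G, ∃ B : Finset (ℕ × ℕ), ∀ x : G, x ∉ H → clsF H x = F →
      (B ⊆ (Finset.range (dd H x)) ×ˢ (Finset.range (ll H x)) ∧ B.card = b ∧
        ∀ p ∈ B, iota (dd H x) (ll H x) p ∈ B) := by
    intro F
    by_cases hex : ∃ x : G, x ∉ H ∧ clsF H x = F
    · obtain ⟨x₀, hx₀, hFx₀⟩ := hex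
      obtain ⟨B, hBsub, hBcard, hBcl⟩ := exists_symm_subset (iota (dd H x₀) (ll H x₀)) b
          ((Finset.range (dd H x₀)) ×ˢ (Finset.range (ll H x₀)))
          (fun p hp => iota_mem hp) (fun p hp => iota_iota hp)
          (by
            rw [Finset.card_product, Finset.card_range, Finset.card_range,
              ← nat_card_eq_dd_mul_ll x₀]
            exact hbn)
          (Or.inl hbeven)
      refine ⟨B, fun x hx hF => ?_⟩
      have hxmem : x ∈ clsF H x₀ := by rw [hFx₀, ← hF]; exact self_mem_clsF x
      have hd : dd H x = dd H x₀ := dd_cls_const hxmem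
      have hl : ll H x = ll H x₀ := ll_cls_const hxmem
      rw [hd, hl]
      exact ⟨hBsub, hBcard, hBcl⟩
    · exact ⟨∅, fun x hx hF => absurd ⟨x, hx, hF⟩ hex⟩
  choose Bof hBof using hBsel
  set S2 : Finset G := Finset.univ.filter
      (fun x => x ∉ H ∧ (delF H x, labelF H x) ∈ Bof (clsF H x)) with hS2
  have hS2mem : ∀ x : G, x ∈ S2 ↔ x ∉ H ∧ (delF H x, labelF H x) ∈ Bof (clsF H x) := by
    intro x; simp [hS2]
  have hS2H : ∀ x ∈ S2, x ∉ H := fun x hx => ((hS2mem x).1 hx).1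
  -- closure of S2 under inversion
  have hS2cl : ∀ x ∈ S2, x⁻¹ ∈ S2 := by
    intro x hx
    rcases (hS2mem x).1 hx with ⟨hxH, hxB⟩
    have hxH' : x⁻¹ ∉ H := fun h => hxH (by simpa using inv_mem h)
    rw [hS2mem, clsF_inv]
    refine ⟨hxH', ?_⟩
    have hBp := hBof (clsF H x) x hxH rfl
    by_cases hcell : cellF H x = cellF H x⁻¹
    · have hxr : x⁻¹ ∈ rowF H x := by
        have h1 := self_mem_cellF (H := H) x⁻¹
        rw [← hcell] at h1
        exact (Finset.mem_inter.1 h1).1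
      obtain ⟨hd0, hd0'⟩ := delF_eq_zero_of_row_inv hxr
      by_cases hxx : x⁻¹ = x
      · rw [hxx]; exact hxB
      · obtain ⟨hlab, hlt⟩ := labelF_inv_of_eq hcell hxx
        have hiota := hBp.2.2 _ hxB
        have he : iota (dd H x) (ll H x) (delF H x, labelF H x) =
            (delF H x⁻¹, labelF H x⁻¹) := by
          rw [iota_apply, if_pos hd0, hd0', hlab, if_pos hlt]
        rw [← he]
        exact hiota
    · have hlab : labelF H x⁻¹ = labelF H x := labelF_inv_of_ne hcell
      have hdinv : delF H x⁻¹ = (dd H x - delF H x) % dd H x := delF_inv x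
      by_cases hd0 : delF H x = 0
      · rw [hdinv, hd0, Nat.sub_zero, Nat.mod_self, hlab, ← hd0]
        exact hxB
      · have hiota := hBp.2.2 _ hxB
        have he : iota (dd H x) (ll H x) (delF H x, labelF H x) =
            (delF H x⁻¹, labelF H x⁻¹) := by
          rw [iota_apply, if_neg hd0, hdinv, hlab,
            Nat.mod_eq_of_lt (by have := delF_lt (H := H) x; omega)]
        rw [← he]
        exact hiota
  -- row counts for S2
  have hS2count : ∀ u : G, u ∉ H → ((rowF H u).filter (fun z => z ∈ S2)).card = b := by
    intro u hu
    have hBprops := hBof (clsF H u) u hu rfl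
    have heq : (rowF H u).filter (fun z => z ∈ S2) =
        (rowF H u).filter (fun z => (delF H z, labelF H z) ∈ Bof (clsF H u)) := by
      ext z
      simp only [Finset.mem_filter, and_congr_right_iff]
      intro hz
      have hcls : clsF H z = clsF H u :=
        clsF_eq_of_mem (Finset.mem_union_left _ (rowF_subset_dosetF u hz))
      have hzH : z ∉ H := fun hzh => hu (mem_H_of_rowF hz hzh)
      rw [hS2mem z, hcls]
      tauto
    rw [heq, card_row_filter_B (Bof (clsF H u)) hBprops.1, hBprops.2.1]
  -- assemble
  refine ⟨↑(S1 ∪ S2), ?_, ?_, ?_, ?_⟩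
  · intro x hx
    rcases Finset.mem_union.1 (by exact_mod_cast hx) with h1 | h1
    · have := ((hs1mem x).1 (hS1sub h1)).1
      simpa using this
    · have h2 := hS2H x h1
      simp only [Set.mem_compl_iff, Set.mem_singleton_iff]
      intro h3
      exact h2 (h3 ▸ one_mem H)
  · have hcl : ∀ y ∈ S1 ∪ S2, y⁻¹ ∈ S1 ∪ S2 := by
      intro y hy
      rcases Finset.mem_union.1 hy with h1 | h1
      · exact Finset.mem_union_left _ (hS1cl y h1)
      · exact Finset.mem_union_right _ (hS2cl y h1)
    ext x
    rw [Set.mem_inv]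
    constructor
    · intro hx
      have h1 : x⁻¹ ∈ S1 ∪ S2 := by exact_mod_cast hx
      have h2 := hcl _ h1
      rw [inv_inv] at h2
      exact_mod_cast h2
    · intro hx
      have h1 : x ∈ S1 ∪ S2 := by exact_mod_cast hx
      exact_mod_cast hcl _ h1
  · intro v hv
    have hvH : v ∈ H := hv
    have hset : {h ∈ (H : Set G) | h * v⁻¹ ∈ (↑(S1 ∪ S2) : Set G)} =
        ↑(Finset.univ.filter (fun h : G => h ∈ H ∧ h * v⁻¹ ∈ S1 ∪ S2)) := by
      ext g
      simp [Set.mem_setOf_eq]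
    rw [hset, Set.ncard_coe_finset, ← hS1card]
    apply Finset.card_bij (fun h _ => h * v⁻¹)
    · intro g hg
      rcases Finset.mem_filter.1 hg with ⟨-, hgH, hgU⟩
      rcases Finset.mem_union.1 hgU with h1 | h1
      · exact h1
      · exact absurd (mul_mem hgH (inv_mem hvH)) (hS2H _ h1)
    · intro a1 ha1 a2 ha2 hab
      exact mul_right_cancel hab
    · intro z hz
      refine ⟨z * v, Finset.mem_filter.2 ⟨Finset.mem_univ _, ?_, ?_⟩, by group⟩
      · exact mul_mem ((hs1mem z).1 (hS1sub hz)).2 hvH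
      · have h2 : z * v * v⁻¹ = z := by group
        rw [h2]
        exact Finset.mem_union_left _ hz
  · intro v hv
    have hvH : v ∉ H := hv
    have hvH' : v⁻¹ ∉ H := fun h => hvH (by simpa using inv_mem h)
    have hset : {h ∈ (H : Set G) | h * v⁻¹ ∈ (↑(S1 ∪ S2) : Set G)} =
        ↑(Finset.univ.filter (fun h : G => h ∈ H ∧ h * v⁻¹ ∈ S1 ∪ S2)) := by
      ext g
      simp [Set.mem_setOf_eq]
    rw [hset, Set.ncard_coe_finset, ← hS2count v⁻¹ hvH']
    apply Finset.card_bij (fun h _ => h * v⁻¹)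
    · intro g hg
      rcases Finset.mem_filter.1 hg with ⟨-, hgH, hgU⟩
      refine Finset.mem_filter.2 ⟨?_, ?_⟩
      · refine mem_rowF.2 ?_
        have h2 : g * v⁻¹ * (v⁻¹)⁻¹ = g := by group
        rw [h2]
        exact hgH
      · rcases Finset.mem_union.1 hgU with h1 | h1
        · exfalso
          have h2 : v⁻¹ = g⁻¹ * (g * v⁻¹) := by group
          exact hvH' (h2 ▸ mul_mem (inv_mem hgH) ((hs1mem _).1 (hS1sub h1)).2)
        · exact h1
    · intro a1 ha1 a2 ha2 hab
      exact mul_right_cancel hab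
    · intro z hz
      rcases Finset.mem_filter.1 hz with ⟨hzr, hzS⟩
      refine ⟨z * v, Finset.mem_filter.2 ⟨Finset.mem_univ _, ?_, ?_⟩, by group⟩
      · have h1 := mem_rowF.1 hzr
        rw [inv_inv] at h1
        exact h1
      · have h2 : z * v * v⁻¹ = z := by group
        rw [h2]
        exact Finset.mem_union_right _ hzS
end

section
/- Let G be a finite group and H a subgroup of even order |H|. Then for every integer a with 0 ≤ a ≤ |H|−1, the set H \ {1} contains an inverse-closed subset of size a. -/
open scoped Pointwise

private lemma pairs_lemma {G : Type*} [Group G] [DecidableEq G] (P : Finset G)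
    (hP : ∀ x ∈ P, x⁻¹ ∈ P ∧ x⁻¹ ≠ x) :
    ∀ p : ℕ, 2 * p ≤ P.card → ∃ Q : Finset G, Q ⊆ P ∧ (∀ x ∈ Q, x⁻¹ ∈ Q) ∧ Q.card = 2 * p := by
  intro p
  induction p with
  | zero => exact fun _ => ⟨∅, by simp, by simp, by simp⟩
  | succ p ih =>
    intro hle
    obtain ⟨Q, hQP, hQinv, hQcard⟩ := ih (by omega)
    have hlt : Q.card < P.card := by omega
    have hns : ¬ P ⊆ Q := fun h => absurd (Finset.card_le_card h) (by omega)
    obtain ⟨x, hxP, hxQ⟩ := Finset.not_subset.mp hns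
    obtain ⟨hxiP, hxine⟩ := hP x hxP
    have hxiQ : x⁻¹ ∉ Q := fun h => hxQ (by simpa using hQinv _ h)
    refine ⟨insert x⁻¹ (insert x Q), ?_, ?_, ?_⟩
    · intro y hy
      simp only [Finset.mem_insert] at hy
      rcases hy with rfl | rfl | hy
      · exact hxiP
      · exact hxP
      · exact hQP hy
    · intro y hy
      simp only [Finset.mem_insert] at hy ⊢
      rcases hy with rfl | rfl | hy
      · simp
      · tauto
      · exact Or.inr (Or.inr (hQinv _ hy))
    · rw [Finset.card_insert_of_notMem (by simp [hxine, hxiQ]),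
        Finset.card_insert_of_notMem hxQ, hQcard]
      ring

private lemma inv_closed_coe {G : Type*} [Group G] (F : Finset G)
    (hinv : ∀ x ∈ F, x⁻¹ ∈ F) : (↑F : Set G)⁻¹ = ↑F := by
  ext x
  simp only [Set.mem_inv, Finset.mem_coe]
  constructor
  · intro h; simpa using hinv _ h
  · intro h; exact hinv _ h

theorem stmt12 {G : Type*} [Group G] [Fintype G] (H : Subgroup G)
    (heven : Even (Nat.card H)) :
    ∀ a : ℕ, a ≤ Nat.card H - 1 →
      ∃ S : Set G, S ⊆ (H : Set G) \ {1} ∧ S⁻¹ = S ∧ S.ncard = a := by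
  classical
  intro a ha
  set T : Finset G := (H : Set G).toFinset \ {1} with hT
  have hmemT : ∀ x : G, x ∈ T ↔ x ∈ H ∧ x ≠ 1 := by
    intro x; simp [hT]
  have hTcard : T.card = Nat.card H - 1 := by
    rw [hT, Finset.card_sdiff_of_subset (by simp [H.one_mem])]
    simp [Set.toFinset_card, Nat.card_eq_fintype_card]
  have hTsub : (↑T : Set G) ⊆ (H : Set G) \ {1} := by
    intro x hx
    rw [Finset.mem_coe, hmemT] at hx
    exact ⟨hx.1, hx.2⟩
  have hTinv : ∀ x ∈ T, x⁻¹ ∈ T := by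
    intro x hx
    rw [hmemT] at hx ⊢
    exact ⟨H.inv_mem hx.1, by simpa using hx.2⟩
  rcases eq_or_lt_of_le ha with heq | hlt
  · exact ⟨↑T, hTsub, inv_closed_coe T hTinv, by rw [Set.ncard_coe_finset, hTcard, heq]⟩
  · -- a < Nat.card H - 1
    set I : Finset G := T.filter (fun x => x⁻¹ = x) with hI
    set P : Finset G := T.filter (fun x => ¬ x⁻¹ = x) with hPdef
    have hIP : I.card + P.card = T.card := Finset.card_filter_add_card_filter_not _
    have hPcond : ∀ x ∈ P, x⁻¹ ∈ P ∧ x⁻¹ ≠ x := by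
      intro x hx
      rw [hPdef, Finset.mem_filter] at hx
      refine ⟨?_, hx.2⟩
      rw [hPdef, Finset.mem_filter]
      refine ⟨hTinv _ hx.1, ?_⟩
      simp only [inv_inv]
      exact fun h => hx.2 h.symm
    -- an involution exists (Cauchy)
    have hcard2 : (2 : ℕ) ∣ Fintype.card H := by
      rw [← Nat.card_eq_fintype_card]
      exact heven.two_dvd
    obtain ⟨t, ht⟩ := exists_prime_orderOf_dvd_card (G := H) 2 hcard2
    have htne : (t : G) ≠ 1 := by
      intro h
      have : t = 1 := Subtype.ext h
      rw [this, orderOf_one] at ht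
      omega
    have htinv : (t : G)⁻¹ = (t : G) := by
      have h2 : t * t = 1 := by
        have := pow_orderOf_eq_one t
        rwa [ht, pow_two] at this
      have : (t : G) * (t : G) = 1 := by exact_mod_cast congrArg (Subtype.val) h2
      exact inv_eq_of_mul_eq_one_left this
    have htI : (t : G) ∈ I := by
      rw [hI, Finset.mem_filter, hmemT]
      exact ⟨⟨t.2, htne⟩, htinv⟩
    have hI1 : 1 ≤ I.card := Finset.card_pos.mpr ⟨_, htI⟩
    have htot : a < I.card + P.card := by omega
    obtain ⟨j, p, hj, hp, hsum⟩ : ∃ j p, j ≤ I.card ∧ 2 * p ≤ P.card ∧ 2 * p + j = a := by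
      by_cases hcase : a ≤ I.card
      · exact ⟨a, 0, hcase, by omega, by omega⟩
      · rcases Nat.even_or_odd (a - I.card) with ⟨k, hk⟩ | ⟨k, hk⟩
        · exact ⟨I.card, k, le_rfl, by omega, by omega⟩
        · exact ⟨I.card - 1, k + 1, by omega, by omega, by omega⟩
    obtain ⟨Q, hQP, hQinv, hQcard⟩ := pairs_lemma P hPcond p hp
    obtain ⟨J, hJI, hJcard⟩ := Finset.exists_subset_card_eq hj
    have hdisj : Disjoint Q J := by
      refine Finset.disjoint_left.mpr fun x hxQ hxJ => ?_
      have h1 := (Finset.mem_filter.mp (hQP hxQ)).2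
      have h2 := (Finset.mem_filter.mp (hJI hxJ)).2
      exact h1 h2
    have hUinv : ∀ x ∈ Q ∪ J, x⁻¹ ∈ Q ∪ J := by
      intro x hx
      rcases Finset.mem_union.mp hx with h | h
      · exact Finset.mem_union_left _ (hQinv _ h)
      · have := (Finset.mem_filter.mp (hJI h)).2
        exact Finset.mem_union_right _ (by rwa [this])
    refine ⟨↑(Q ∪ J), ?_, inv_closed_coe _ hUinv, ?_⟩
    · refine subset_trans ?_ hTsub
      intro x hx
      rcases Finset.mem_union.mp hx with h | h
      · exact (Finset.mem_filter.mp (hQP h)).1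
      · exact (Finset.mem_filter.mp (hJI h)).1
    · rw [Set.ncard_coe_finset, Finset.card_union_of_disjoint hdisj, hQcard, hJcard, hsum]
end

section
/- Let G be a finite group, H a subgroup, and x ∈ G \ H with HxH = Hx⁻¹H. Suppose H is a perfect code of G and |H|/|H ∩ H^x| is odd. Then the coset Hx contains an inverse-closed subset of size |H ∩ H^x| that includes at least one involution. -/
open scoped Pointwise

/-- H is a perfect code of G: it admits an inverse-closed right transversal in G. -/
def IsPerfectCode {G : Type*} [Group G] (H : Subgroup G) : Prop :=
  ∃ T : Set G, (∀ g : G, ∃! t, t ∈ T ∧ t * g⁻¹ ∈ H) ∧ T⁻¹ = T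

lemma even_card_aux {α : Type*} [DecidableEq α] (f : α → α) (hf : ∀ a, f (f a) = a) :
    ∀ s : Finset α, (∀ a ∈ s, f a ∈ s) → (∀ a ∈ s, f a ≠ a) → Even s.card := by
  intro s
  induction s using Finset.strongInduction with
  | _ s ih =>
    rcases s.eq_empty_or_nonempty with rfl | ⟨a, ha⟩
    · simp
    · intro hcl hnf
      have hfa := hcl a ha
      have hne : f a ≠ a := hnf a ha
      have hsub : {a, f a} ⊆ s := by
        intro b hb
        simp only [Finset.mem_insert, Finset.mem_singleton] at hb
        rcases hb with rfl | rfl <;> assumption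
      have hss : s \ {a, f a} ⊂ s := Finset.sdiff_ssubset hsub ⟨a, by simp⟩
      have hcl' : ∀ b ∈ s \ {a, f a}, f b ∈ s \ {a, f a} := by
        intro b hb
        simp only [Finset.mem_sdiff, Finset.mem_insert, Finset.mem_singleton] at hb ⊢
        obtain ⟨hbs, hb2⟩ := hb
        push_neg at hb2
        refine ⟨hcl b hbs, ?_⟩
        push_neg
        constructor
        · intro h; exact hb2.2 (by rw [← h, hf])
        · intro h
          exact hb2.1 (by have := congrArg f h; rwa [hf, hf] at this)
      have hnf' : ∀ b ∈ s \ {a, f a}, f b ≠ b := fun b hb => hnf b (Finset.mem_sdiff.1 hb).1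
      have hev := ih _ hss hcl' hnf'
      have hc2 : ({a, f a} : Finset α).card = 2 := by
        rw [Finset.card_insert_of_notMem (by simp [Ne.symm hne]), Finset.card_singleton]
      have hcard : s.card = (s \ {a, f a}).card + 2 := by
        rw [Finset.card_sdiff_of_subset hsub, hc2, Nat.sub_add_cancel (hc2 ▸ Finset.card_le_card hsub)]
      rw [hcard]
      exact hev.add (even_two)

lemma exists_inv_fixed {G : Type*} [Group G] (s : Set G) (hfin : s.Finite)
    (hinv : s⁻¹ = s) (hodd : Odd s.ncard) : ∃ a ∈ s, a⁻¹ = a := by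
  classical
  by_contra hcon
  push_neg at hcon
  have hcl : ∀ a ∈ hfin.toFinset, a⁻¹ ∈ hfin.toFinset := by
    intro a ha
    rw [Set.Finite.mem_toFinset] at ha ⊢
    rw [← hinv]; simpa using ha
  have hnf : ∀ a ∈ hfin.toFinset, a⁻¹ ≠ a := by
    intro a ha
    exact hcon a (hfin.mem_toFinset.1 ha)
  have := even_card_aux (fun a : G => a⁻¹) (fun a => inv_inv a) hfin.toFinset hcl hnf
  rw [Set.ncard_eq_toFinset_card s hfin] at hodd
  exact (Nat.not_even_iff_odd.2 hodd) this

theorem stmt14 {G : Type*} [Group G] [Fintype G] (H : Subgroup G) (x : G)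
    (hx : x ∉ H)
    (heq : (H : Set G) * {x} * (H : Set G) = (H : Set G) * {x⁻¹} * (H : Set G))
    (hpc : IsPerfectCode H)
    (hodd : Odd (Nat.card H /
      ((H : Set G) ∩ ((fun g => x⁻¹ * g * x) '' (H : Set G))).ncard)) :
    ∃ S : Set G, S ⊆ (H : Set G) * {x} ∧ S⁻¹ = S ∧
      S.ncard = ((H : Set G) ∩ ((fun g => x⁻¹ * g * x) '' (H : Set G))).ncard ∧
      ∃ y ∈ S, y ^ 2 = 1 := by
  classical
  obtain ⟨T, hT, hTinv⟩ := hpc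
  -- transversal function
  set f : G → G := fun g => (hT g).exists.choose with hfdef
  have hfT : ∀ g, f g ∈ T := fun g => (hT g).exists.choose_spec.1
  have hfH : ∀ g, f g * g⁻¹ ∈ H := fun g => (hT g).exists.choose_spec.2
  have hfu : ∀ g t, t ∈ T → t * g⁻¹ ∈ H → t = f g := fun g t h1 h2 =>
    (hT g).unique ⟨h1, h2⟩ ⟨hfT g, hfH g⟩
  have hfeq : ∀ g g', g * g'⁻¹ ∈ H → f g = f g' := by
    intro g g' hgg'
    refine hfu g' (f g) (hfT g) ?_
    have e : f g * g'⁻¹ = (f g * g⁻¹) * (g * g'⁻¹) := by group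
    rw [e]; exact H.mul_mem (hfH g) hgg'
  have hfeq' : ∀ g g', f g = f g' → g * g'⁻¹ ∈ H := by
    intro g g' h
    have e : g * g'⁻¹ = (f g * g⁻¹)⁻¹ * (f g' * g'⁻¹) := by rw [← h]; group
    rw [e]; exact H.mul_mem (H.inv_mem (hfH g)) (hfH g')
  -- the double coset
  set D : Set G := (H : Set G) * {x} * (H : Set G) with hDdef
  have hDinv : D⁻¹ = D := by
    have e : D⁻¹ = (H : Set G) * {x⁻¹} * (H : Set G) := by
      rw [hDdef, mul_inv_rev, mul_inv_rev, Set.inv_singleton, inv_coe_set, mul_assoc]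
    rw [e, ← heq]
  have hmemD : ∀ g, g ∈ D ↔ ∃ h1 ∈ H, ∃ h2 ∈ H, g = h1 * x * h2 := by
    intro g
    constructor
    · intro hg
      obtain ⟨u, hu, h2, hh2, huh2⟩ := Set.mem_mul.1 hg
      obtain ⟨h1, hh1, xx, hxx, hh1x⟩ := Set.mem_mul.1 hu
      rw [Set.mem_singleton_iff] at hxx
      subst hxx
      exact ⟨h1, hh1, h2, hh2, by rw [← huh2, ← hh1x]⟩
    · rintro ⟨h1, hh1, h2, hh2, rfl⟩
      exact Set.mul_mem_mul (Set.mul_mem_mul hh1 rfl) hh2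
  -- the conjugate subgroup and the intersection
  set Hc : Subgroup G := H.map (MulAut.conj x⁻¹).toMonoidHom with hHcdef
  have hHcmem : ∀ g, g ∈ Hc ↔ x * g * x⁻¹ ∈ H := by
    intro g
    constructor
    · rintro ⟨h, hh, rfl⟩
      simpa [MulAut.conj_apply, mul_assoc] using hh
    · intro hg
      exact ⟨x * g * x⁻¹, hg, by simp [MulAut.conj_apply]; group⟩
  have hHcset : (Hc : Set G) = (fun g => x⁻¹ * g * x) '' (H : Set G) := by
    rw [hHcdef, Subgroup.coe_map]
    apply Set.image_congr
    intro a _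
    simp [MulAut.conj_apply]
  set K : Subgroup G := H ⊓ Hc with hKdef
  have hKset : (K : Set G) = (H : Set G) ∩ ((fun g => x⁻¹ * g * x) '' (H : Set G)) := by
    rw [hKdef, Subgroup.coe_inf, hHcset]
  have hKle : K ≤ H := inf_le_left
  set K' : Subgroup H := K.subgroupOf H with hK'def
  have hcardK : Nat.card K' = Nat.card K :=
    Nat.card_congr (Subgroup.subgroupOfEquivOfLe hKle).toEquiv
  -- cardinality rewriting
  have hncard : ((H : Set G) ∩ ((fun g => x⁻¹ * g * x) '' (H : Set G))).ncard
      = Nat.card K' := by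
    rw [← hKset, ← Nat.card_coe_set_eq, hcardK]
    congr 1
  -- the quotient map into T ∩ D
  set φ : H → G := fun h => f (x * (h : G)⁻¹) with hφdef
  have hwd : ∀ a b : H, (QuotientGroup.leftRel K') a b → φ a = φ b := by
    intro a b hab
    rw [QuotientGroup.leftRel_apply] at hab
    rw [Subgroup.mem_subgroupOf] at hab
    have hmem : x * ((a⁻¹ * b : H) : G) * x⁻¹ ∈ H := (hHcmem _).1 (Subgroup.mem_inf.1 hab).2
    apply hfeq
    have e : (x * (a : G)⁻¹) * (x * (b : G)⁻¹)⁻¹ = x * ((a : G)⁻¹ * (b : G)) * x⁻¹ := by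
      group
    rw [e]
    simpa using hmem
  set Φ : H ⧸ K' → G := fun q => Quotient.liftOn' q φ hwd with hΦdef
  have hΦmk : ∀ a : H, Φ (QuotientGroup.mk a) = φ a := fun a => rfl
  have hΦinj : Function.Injective Φ := by
    intro qa qb
    induction qa using QuotientGroup.induction_on
    induction qb using QuotientGroup.induction_on
    rename_i a b
    intro hab
    rw [hΦmk, hΦmk] at hab
    have h1 := hfeq' _ _ hab
    have e : (x * (a : G)⁻¹) * (x * (b : G)⁻¹)⁻¹ = x * ((a : G)⁻¹ * (b : G)) * x⁻¹ := by
      group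
    rw [e] at h1
    have hmem : ((a⁻¹ * b : H) : G) ∈ Hc := by
      rw [hHcmem]
      simpa using h1
    apply Quotient.sound'
    rw [QuotientGroup.leftRel_apply, Subgroup.mem_subgroupOf]
    exact ⟨(a⁻¹ * b : H).2, hmem⟩
  have hΦrange : Set.range Φ = T ∩ D := by
    ext t
    constructor
    · rintro ⟨q, rfl⟩
      induction q using QuotientGroup.induction_on
      rename_i a
      rw [hΦmk]
      refine ⟨hfT _, ?_⟩
      rw [hmemD]
      refine ⟨φ a * (x * (a : G)⁻¹)⁻¹, hfH _, (a : G)⁻¹, H.inv_mem a.2, ?_⟩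
      group
    · rintro ⟨htT, htD⟩
      obtain ⟨h1, hh1, h2, hh2, rfl⟩ := (hmemD _).1 htD
      refine ⟨QuotientGroup.mk ⟨h2⁻¹, H.inv_mem hh2⟩, ?_⟩
      rw [hΦmk]
      refine (hfu _ _ htT ?_).symm
      show h1 * x * h2 * (x * ((h2⁻¹ : G))⁻¹)⁻¹ ∈ H
      have e : h1 * x * h2 * (x * ((h2⁻¹ : G))⁻¹)⁻¹ = h1 := by group
      rw [e]
      exact hh1
  -- cardinality of T ∩ D
  have hTD : (T ∩ D).ncard = K'.index := by
    have e1 : Nat.card (H ⧸ K') = Nat.card (T ∩ D : Set G) := by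
      rw [← hΦrange]
      exact Nat.card_congr (Equiv.ofInjective Φ hΦinj)
    rw [Nat.card_coe_set_eq] at e1
    rw [← e1]
    rfl
  have hKpos : 0 < Nat.card K' := Nat.card_pos
  have hindex : K'.index = Nat.card H / Nat.card K' := by
    have hmi := Subgroup.card_mul_index K'
    exact (Nat.div_eq_of_eq_mul_left hKpos (by rw [mul_comm]; exact hmi.symm)).symm
  have hoddTD : Odd ((T ∩ D).ncard) := by
    rw [hTD, hindex, ← hncard]
    exact hodd
  have hTDinv : (T ∩ D)⁻¹ = T ∩ D := by
    rw [Set.inter_inv, hTinv, hDinv]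
  obtain ⟨t, htTD, htfix⟩ := exists_inv_fixed (T ∩ D) (Set.toFinite _) hTDinv hoddTD
  obtain ⟨h1, hh1, h2, hh2, hte⟩ := (hmemD t).1 htTD.2
  -- the involution y in Hx
  set y : G := (h2 * h1) * x with hydef
  have hyH : y ∈ (H : Set G) * {x} := Set.mul_mem_mul (H.mul_mem hh2 hh1) rfl
  have hyt : y = h2 * t * h2⁻¹ := by rw [hydef, hte]; group
  have htt : t * t = 1 := by
    nth_rewrite 1 [← htfix]
    group
  have hy2 : y ^ 2 = 1 := by
    have e : y ^ 2 = h2 * (t * t) * h2⁻¹ := by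
      rw [sq, hyt]
      group
    rw [e, htt]
    group
  have hyinv : y⁻¹ = y := inv_eq_of_mul_eq_one_right (by rw [← sq]; exact hy2)
  -- construct S
  set A : Set G := (H : Set G) * {x} with hAdef
  refine ⟨A ∩ A⁻¹, Set.inter_subset_left, ?_, ?_, y, ⟨hyH, by rw [Set.mem_inv, hyinv]; exact hyH⟩, hy2⟩
  · rw [Set.inter_inv, inv_inv, Set.inter_comm]
  · -- S = (fun g => g * y) '' K
    have hmemA : ∀ g, g ∈ A ↔ ∃ h ∈ H, g = h * x := by
      intro g
      constructor
      · intro hg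
        obtain ⟨h, hh, xx, hxx, he⟩ := Set.mem_mul.1 hg
        rw [Set.mem_singleton_iff] at hxx
        subst hxx
        exact ⟨h, hh, he.symm⟩
      · rintro ⟨h, hh, rfl⟩
        exact Set.mul_mem_mul hh rfl
    set h0 : G := h2 * h1 with hh0def
    have hh0H : h0 ∈ H := H.mul_mem hh2 hh1
    have hh0inv : h0⁻¹ = x * h0 * x := by
      have e : h0 * (x * h0 * x) = 1 := by
        have := hy2
        rw [hydef, sq] at this
        rw [← this]
        group
      exact inv_eq_of_mul_eq_one_right e
    have hSeq : A ∩ A⁻¹ = (fun g => g * y) '' (K : Set G) := by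
      ext g
      constructor
      · rintro ⟨hgA, hgAinv⟩
        rw [Set.mem_inv] at hgAinv
        obtain ⟨h, hh, rfl⟩ := (hmemA g).1 hgA
        obtain ⟨h', hh', he'⟩ := (hmemA _).1 hgAinv
        have hhe : h = x⁻¹ * h'⁻¹ * x⁻¹ := by
          have e2 := congrArg (·⁻¹) he'
          simp only [inv_inv, mul_inv_rev] at e2
          rw [← e2]
          group
        refine ⟨h * h0⁻¹, ?_, ?_⟩
        · show h * h0⁻¹ ∈ K
          refine Subgroup.mem_inf.2 ⟨H.mul_mem hh (H.inv_mem hh0H), (hHcmem _).2 ?_⟩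
          have e3 : x * (h * h0⁻¹) * x⁻¹ = h'⁻¹ * h0 := by
            rw [hhe, hh0inv]
            group
          rw [e3]
          exact H.mul_mem (H.inv_mem hh') hh0H
        · show h * h0⁻¹ * y = h * x
          rw [hydef]
          group
      · rintro ⟨k, hk, rfl⟩
        have hkH : k ∈ H := (Subgroup.mem_inf.1 hk).1
        have hkHc : x * k * x⁻¹ ∈ H := (hHcmem _).1 (Subgroup.mem_inf.1 hk).2
        constructor
        · exact (hmemA _).2 ⟨k * h0, H.mul_mem hkH hh0H, by rw [hydef]; group⟩
        · rw [Set.mem_inv]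
          refine (hmemA _).2 ⟨h0 * (x * k * x⁻¹)⁻¹, H.mul_mem hh0H (H.inv_mem hkHc), ?_⟩
          rw [mul_inv_rev, hyinv, hydef]
          group
    rw [hSeq, Set.ncard_image_of_injective _ (mul_left_injective y), ← hKset]
end
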